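/- Divergence of Q on Gaussian data: for every 0 < s ≤ 1, the sum over quadruples of integers (n₁,n₂,n₃,n₄) with n₁-n₂+n₃-n₄=0, n₂ ≠ n₁ and n₂ ≠ n₃ (equivalently n₁ ≠ n₂, n₄), of |Ψ_s(n̄)|² Π_{j=1}^4 ⟨nⱼ⟩^{-2s}, is infinite. -/

import Mathlib

/-!
Already the diagonal family `n̄ = (0, N, 0, -N)` makes the series diverge: there
`Ψ_s = 2 - 2⟨N⟩^{2s}` and the weight is `⟨N⟩^{-4s}`, so the summand equals
`4 (1 - ⟨N⟩^{-2s})²`, which tends to `4` rather than to `0` as `N → ∞`.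
-/


/-- The Japanese bracket `⟨x⟩ = (1+x²)^{1/2}`. -/
noncomputable def jb (x : ℝ) : ℝ := Real.sqrt (1 + x ^ 2)

/-- `Ψ_s(n₁,n₂,n₃,n₄) = ⟨n₁⟩^{2s} - ⟨n₂⟩^{2s} + ⟨n₃⟩^{2s} - ⟨n₄⟩^{2s}`. -/
noncomputable def Psi (s : ℝ) (n₁ n₂ n₃ n₄ : ℤ) : ℝ :=
  jb n₁ ^ (2 * s) - jb n₂ ^ (2 * s) + jb n₃ ^ (2 * s) - jb n₄ ^ (2 * s)

open Filter Topology

lemma one_le_jb (x : ℝ) : 1 ≤ jb x :=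
  Real.one_le_sqrt.mpr (by nlinarith [sq_nonneg x])

lemma jb_pos (x : ℝ) : 0 < jb x := one_pos.trans_le (one_le_jb x)

lemma jb_zero : jb 0 = 1 := by simp [jb]

lemma jb_neg (x : ℝ) : jb (-x) = jb x := by simp [jb]

lemma le_jb (x : ℝ) : x ≤ jb x :=
  (le_abs_self x).trans <| by
    rw [← Real.sqrt_sq_eq_abs]; exact Real.sqrt_le_sqrt (by linarith)

lemma tendsto_jb_atTop : Tendsto jb atTop atTop :=
  tendsto_atTop_mono le_jb tendsto_id

lemma Psi_zero_self_zero (s : ℝ) (N : ℤ) :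
    Psi s 0 N 0 (0 - N + 0) = 2 - 2 * jb N ^ (2 * s) := by
  simp only [Psi, zero_sub, add_zero, Int.cast_zero, Int.cast_neg, jb_zero, jb_neg,
    Real.one_rpow]
  ring

lemma Psi_zero_self_zero_sq_mul_weight (s : ℝ) (N : ℤ) :
    Psi s 0 N 0 (0 - N + 0) ^ 2 *
        (jb (0 : ℤ) ^ (-(2 * s)) * jb N ^ (-(2 * s)) * jb (0 : ℤ) ^ (-(2 * s)) *
          jb (0 - N + 0 : ℤ) ^ (-(2 * s))) =
      4 * (1 - (jb N ^ (2 * s))⁻¹) ^ 2 := by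
  have hB : jb N ^ (2 * s) ≠ 0 := (Real.rpow_pos_of_pos (jb_pos _) _).ne'
  rw [Psi_zero_self_zero]
  simp only [zero_sub, add_zero, Int.cast_zero, Int.cast_neg, jb_zero,
    jb_neg, Real.one_rpow, Real.rpow_neg (jb_pos _).le]
  field_simp
  ring

lemma tendsto_four_mul_one_sub_inv_jb_rpow_sq {s : ℝ} (hs : 0 < s) :
    Tendsto (fun N : ℤ => 4 * (1 - (jb N ^ (2 * s))⁻¹) ^ 2) atTop (𝓝 4) := by
  have hinv : Tendsto (fun N : ℤ => (jb N ^ (2 * s))⁻¹) atTop (𝓝 0) :=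
    tendsto_inv_atTop_zero.comp <|
      (tendsto_rpow_atTop (by linarith)).comp (tendsto_jb_atTop.comp tendsto_intCast_atTop_atTop)
  simpa using (hinv.const_sub 1).pow 2 |>.const_mul 4

theorem Q_variance_diverges_general (s : ℝ) (hs0 : 0 < s) :
    ¬ Summable (fun n : ℤ × ℤ × ℤ =>
      if n.2.1 ≠ n.1 ∧ n.2.1 ≠ n.2.2 then
        (Psi s n.1 n.2.1 n.2.2 (n.1 - n.2.1 + n.2.2)) ^ 2 *
          (jb n.1 ^ (-(2*s)) * jb n.2.1 ^ (-(2*s)) * jb n.2.2 ^ (-(2*s)) *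
            jb ((n.1 - n.2.1 + n.2.2 : ℤ)) ^ (-(2*s)))
      else 0) := by
  intro hsum
  have hinj : Function.Injective (fun N : ℤ => ((0 : ℤ), N, (0 : ℤ))) := fun a b h => by
    simpa using h
  have hzero :=
    (hsum.tendsto_cofinite_zero.comp hinj.tendsto_cofinite).mono_left atTop_le_cofinite
  refine four_ne_zero (tendsto_nhds_unique ?_ hzero)
  refine (tendsto_four_mul_one_sub_inv_jb_rpow_sq hs0).congr' ?_
  filter_upwards [eventually_gt_atTop 0] with N hN
  dsimp only [Function.comp_apply]
  rw [if_pos ⟨hN.ne', hN.ne'⟩, Psi_zero_self_zero_sq_mul_weight]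

/-- Divergence of `Q` on Gaussian data: for every `0 < s ≤ 1`, the sum over quadruples
on the hyperplane `n₄ = n₁ - n₂ + n₃` with `n₂ ≠ n₁` and `n₂ ≠ n₃` of
`|Ψ_s(n̄)|² Π_{j=1}^4 ⟨nⱼ⟩^{-2s}` is infinite. -/
theorem Q_variance_diverges (s : ℝ) (hs0 : 0 < s) (hs1 : s ≤ 1) :
    ¬ Summable (fun n : ℤ × ℤ × ℤ =>
      if n.2.1 ≠ n.1 ∧ n.2.1 ≠ n.2.2 then
        (Psi s n.1 n.2.1 n.2.2 (n.1 - n.2.1 + n.2.2)) ^ 2 *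
          (jb n.1 ^ (-(2*s)) * jb n.2.1 ^ (-(2*s)) * jb n.2.2 ^ (-(2*s)) *
            jb ((n.1 - n.2.1 + n.2.2 : ℤ)) ^ (-(2*s)))
      else 0) :=
  Q_variance_diverges_general s hs0
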